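/- Let G be a connected simple graph on a finite vertex type V whose number of edges equals its number of vertices, and suppose G contains a cycle of even length k ≥ 4. Then there exists a sequence of simple graphs G = G_0, G_1, ..., G_{(k-2)/2} on the same vertex type V such that for each i < (k-2)/2 the graph G_{i+1} is the clasp of G_i at some pair of distinct vertices, and such that the final graph G_{(k-2)/2} is a tree (connected and acyclic). -/

import Mathlib

/-!
Write the cycle as `u v₂ v₃ v₄ … u` and clasp at `(u, v₃)`: this identifies `v₃` with `u` and
re-attaches `v₃` as a leaf of `u`. The result is still connected, the walk `u v₄ … u` is a cycle
two edges shorter, and since `v₂` is a common neighbour of `u` and `v₃` the edges `u v₂` and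
`v₃ v₂` merge, so the number of edges does not grow. When the cycle has length four, `v₄` is a
second common neighbour, so one edge is lost; a connected graph with fewer edges than vertices
is a tree. Starting from `|E| = |V|` and a cycle of length `k`, this takes `(k - 2) / 2` clasps.
-/

/-- The clasp of a simple graph `G` at a pair of vertices `(v₁, v₃)`: `x` and `y` are
adjacent in the clasp iff `{x, y} = {v₁, v₃}`, or `v₃ ∉ {x, y}` and (`x` and `y` are
adjacent in `G`, or `x = v₁` and `y` is adjacent to `v₃` in `G`, or `y = v₁` and `x`
is adjacent to `v₃` in `G`).  (As a simple graph it is in addition loopless.) -/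
def SimpleGraph.clasp {V : Type*} (G : SimpleGraph V) (v₁ v₃ : V) : SimpleGraph V :=
  SimpleGraph.fromRel (fun x y =>
    s(x, y) = s(v₁, v₃) ∨
      (x ≠ v₃ ∧ y ≠ v₃ ∧
        (G.Adj x y ∨ (x = v₁ ∧ G.Adj v₃ y) ∨ (y = v₁ ∧ G.Adj v₃ x))))

namespace SimpleGraph

variable {V : Type*} {G : SimpleGraph V} {v₁ v₃ x y : V}

lemma clasp_adj_of_adj (h : G.Adj x y) (hx : x ≠ v₃) (hy : y ≠ v₃) :
    (G.clasp v₁ v₃).Adj x y :=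
  (fromRel_adj _ _ _).2 ⟨h.ne, .inl (.inr ⟨hx, hy, .inl h⟩)⟩

lemma clasp_adj_left_of_adj (h₁₃ : v₁ ≠ v₃) (hy₁ : v₁ ≠ y) (hy₃ : y ≠ v₃) (h : G.Adj v₃ y) :
    (G.clasp v₁ v₃).Adj v₁ y :=
  (fromRel_adj _ _ _).2 ⟨hy₁, .inl (.inr ⟨h₁₃, hy₃, .inr (.inl ⟨rfl, h⟩)⟩)⟩

lemma clasp_adj_self (h₁₃ : v₁ ≠ v₃) : (G.clasp v₁ v₃).Adj v₁ v₃ :=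
  (fromRel_adj _ _ _).2 ⟨h₁₃, .inl (.inl rfl)⟩

lemma Connected.clasp (hG : G.Connected) (h₁₃ : v₁ ≠ v₃) : (G.clasp v₁ v₃).Connected := by
  classical
  let f : V → V := fun x => if x = v₃ then v₁ else x
  have hf : ∀ x, (G.clasp v₁ v₃).Reachable x (f x) := by
    intro x
    by_cases hx : x = v₃
    · simpa [f, hx] using (clasp_adj_self h₁₃).symm.reachable
    · simp [f, hx]
  have hleaf : ∀ y, G.Adj v₃ y → (G.clasp v₁ v₃).Reachable v₁ (f y) := by
    intro y hy
    have hy₃ : y ≠ v₃ := hy.ne.symm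
    by_cases hy₁ : v₁ = y
    · simp [f, hy₁]
    · simpa [f, hy₃] using (clasp_adj_left_of_adj h₁₃ hy₁ hy₃ hy).reachable
  have hadj : ∀ x y, G.Adj x y → (G.clasp v₁ v₃).Reachable (f x) (f y) := by
    intro x y hxy
    by_cases hx : x = v₃
    · rw [hx] at hxy
      simpa [f, hx] using hleaf y hxy
    by_cases hy : y = v₃
    · rw [hy] at hxy
      simpa [f, hy] using (hleaf x hxy.symm).symm
    simpa [f, hx, hy] using (clasp_adj_of_adj hxy hx hy).reachable
  have hmap : ∀ x y, G.Reachable x y → (G.clasp v₁ v₃).Reachable (f x) (f y) := by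
    simp only [reachable_iff_reflTransGen]
    exact Relation.ReflTransGen.lift' f fun x y h =>
      (reachable_iff_reflTransGen _ _).1 (hadj x y h)
  exact (connected_iff _).2
    ⟨fun x y => (hf x).trans ((hmap x y (hG x y)).trans (hf y).symm), hG.nonempty⟩

lemma edgeSet_clasp_subset (G : SimpleGraph V) (v₁ v₃ : V) :
    (G.clasp v₁ v₃).edgeSet ⊆ insert s(v₁, v₃) ((G.edgeSet \ G.incidenceSet v₃) ∪
      (fun w => s(v₁, w)) '' (G.neighborSet v₃ \ G.neighborSet v₁)) := by
  have hE : ∀ a b, G.Adj a b → a ≠ v₃ → b ≠ v₃ → s(a, b) ∈ G.edgeSet \ G.incidenceSet v₃ :=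
    fun a b h ha hb => ⟨h, fun hv => by simp_all [incidenceSet, eq_comm]⟩
  have hN : ∀ w, G.Adj v₃ w → v₁ ≠ v₃ → w ≠ v₃ → s(v₁, w) ∈ (G.edgeSet \ G.incidenceSet v₃) ∪
      (fun w => s(v₁, w)) '' (G.neighborSet v₃ \ G.neighborSet v₁) := by
    intro w hw h₁ h₃
    by_cases hw₁ : G.Adj v₁ w
    · exact .inl (hE _ _ hw₁ h₁ h₃)
    · exact .inr ⟨w, ⟨hw, hw₁⟩, rfl⟩
  intro e he
  induction e using Sym2.ind with
  | _ x y =>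
    simp only [mem_edgeSet, SimpleGraph.clasp, fromRel_adj] at he
    rcases he with ⟨-, (h | ⟨hx, hy, h | ⟨rfl, h⟩ | ⟨rfl, h⟩⟩) |
      (h | ⟨hy, hx, h | ⟨rfl, h⟩ | ⟨rfl, h⟩⟩)⟩
    · exact .inl h
    · exact .inr (.inl (hE _ _ h hx hy))
    · exact .inr (hN _ h hx hy)
    · rw [Sym2.eq_swap (a := x)]; exact .inr (hN _ h hy hx)
    · exact .inl (Sym2.eq_swap.trans h)
    · exact .inr (.inl (hE _ _ h.symm hx hy))
    · rw [Sym2.eq_swap (a := x)]; exact .inr (hN _ h hy hx)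
    · exact .inr (hN _ h hx hy)

lemma ncard_edgeSet_clasp_add_ncard_commonNeighbors_le [Finite V] (G : SimpleGraph V)
    (v₁ v₃ : V) :
    (G.clasp v₁ v₃).edgeSet.ncard + (G.commonNeighbors v₁ v₃).ncard ≤ G.edgeSet.ncard + 1 := by
  classical
  have hI : (G.incidenceSet v₃).ncard = (G.neighborSet v₃).ncard :=
    Nat.card_congr (G.incidenceSetEquivNeighborSet v₃)
  have hE := Set.ncard_sdiff_add_ncard_of_subset (G.incidenceSet_subset v₃)
  have hN := Set.ncard_inter_add_ncard_sdiff_eq_ncard (G.neighborSet v₃) (G.neighborSet v₁)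
  rw [Set.inter_comm] at hN
  have hclasp : (G.clasp v₁ v₃).edgeSet.ncard ≤
      (G.edgeSet \ G.incidenceSet v₃).ncard + (G.neighborSet v₃ \ G.neighborSet v₁).ncard + 1 :=
    calc _ ≤ _ := Set.ncard_le_ncard (edgeSet_clasp_subset G v₁ v₃)
      _ ≤ _ := Set.ncard_insert_le _ _
      _ ≤ _ := by gcongr; exact (Set.ncard_union_le _ _).trans (by gcongr; exact Set.ncard_image_le)
  rw [commonNeighbors]
  omega

lemma exists_isCycle_clasp {u v w : V} (hvw : G.Adj v w) (p : G.Walk w u) (hp : p.IsPath)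
    (hv : v ∉ p.support) (hlen : 2 ≤ p.length) :
    ∃ D : (G.clasp u v).Walk u u, D.IsCycle ∧ D.length = p.length + 1 := by
  have huv : u ≠ v := fun h => hv (h ▸ p.end_mem_support)
  have huw : u ≠ w := by
    rintro rfl
    have := Walk.length_eq_zero_iff.2 (Walk.isPath_iff_nil.1 hp)
    omega
  have hedges : ∀ e ∈ p.edges, e ∈ (G.clasp u v).edgeSet := by
    intro e he
    induction e using Sym2.ind with
    | _ a b =>
      exact clasp_adj_of_adj (p.edges_subset_edgeSet he)
        (fun h => hv (h ▸ p.fst_mem_support_of_mem_edges he))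
        (fun h => hv (h ▸ p.snd_mem_support_of_mem_edges he))
  refine ⟨.cons (clasp_adj_left_of_adj huv huw hvw.ne.symm hvw) (p.transfer _ hedges), ?_, by simp⟩
  rw [Walk.isCycle_iff_isPath_tail_and_le_length]
  simpa using ⟨hp.transfer hedges, by omega⟩

lemma Walk.IsCycle.exists_clasp [Finite V] {u : V} {C : G.Walk u u} (hC : C.IsCycle)
    (hlen : 4 ≤ C.length) :
    ∃ v, u ≠ v ∧ (G.clasp u v).edgeSet.ncard ≤ G.edgeSet.ncard ∧
      (C.length = 4 → (G.clasp u v).edgeSet.ncard < G.edgeSet.ncard) ∧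
      (4 < C.length → ∃ D : (G.clasp u v).Walk u u, D.IsCycle ∧ D.length + 2 = C.length) := by
  rcases C with _ | ⟨h₁, _ | ⟨h₂, _ | ⟨h₃, q⟩⟩⟩ <;>
    simp only [Walk.length_cons, Walk.length_nil] at hlen ⊢
  · omega
  · omega
  · omega
  rename_i v₂ v₃ v₄
  obtain ⟨⟨hq, hv₃q⟩, -, hv₂q⟩ := by
    simpa [Walk.cons_isPath_iff] using ((Walk.cons_isCycle_iff _ _).1 hC).1
  have hu₃ : u ≠ v₃ := fun h => hv₃q (h ▸ q.end_mem_support)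
  have hv₂ : v₂ ∈ G.commonNeighbors u v₃ := ⟨h₁, h₂.symm⟩
  have hcount := ncard_edgeSet_clasp_add_ncard_commonNeighbors_le G u v₃
  have hcommon : 0 < (G.commonNeighbors u v₃).ncard :=
    (Set.ncard_pos (Set.toFinite _)).2 ⟨v₂, hv₂⟩
  refine ⟨v₃, hu₃, by omega, fun h4 => ?_, fun h4 => ?_⟩
  · have hv₄ : v₄ ∈ G.commonNeighbors u v₃ :=
      ⟨(Walk.adj_of_length_eq_one (by omega : q.length = 1)).symm, h₃⟩
    have hv₂₄ : v₂ ≠ v₄ := fun h => hv₂q (h ▸ q.start_mem_support)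
    have := Set.ncard_le_ncard (Set.pair_subset hv₂ hv₄)
    rw [Set.ncard_pair hv₂₄] at this
    omega
  · obtain ⟨D, hD, hDlen⟩ := exists_isCycle_clasp h₃ q hq hv₃q (by omega)
    exact ⟨D, hD, by omega⟩

lemma Connected.isTree_of_ncard_edgeSet_lt [Finite V] (hG : G.Connected)
    (h : G.edgeSet.ncard < Nat.card V) : G.IsTree :=
  isTree_iff_connected_and_card.2
    ⟨hG, le_antisymm (by rwa [Nat.card_coe_set_eq]) hG.card_vert_le_card_edgeSet_add_one⟩

def ClaspsTo (G : SimpleGraph V) (m : ℕ) (H : SimpleGraph V) : Prop :=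
  ∃ Gs : ℕ → SimpleGraph V, Gs 0 = G ∧
    (∀ i < m, ∃ a b : V, a ≠ b ∧ Gs (i + 1) = (Gs i).clasp a b) ∧ Gs m = H

lemma ClaspsTo.refl (G : SimpleGraph V) : G.ClaspsTo 0 G :=
  ⟨fun _ => G, rfl, fun _ hi => absurd hi (Nat.not_lt_zero _), rfl⟩

lemma claspsTo_succ_of_clasp {H : SimpleGraph V} {m : ℕ} {a b : V} (hab : a ≠ b)
    (h : (G.clasp a b).ClaspsTo m H) : G.ClaspsTo (m + 1) H := by
  obtain ⟨Gs, h0, hsteps, hm⟩ := h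
  refine ⟨fun | 0 => G | i + 1 => Gs i, rfl, ?_, hm⟩
  rintro (_ | i) hi
  · exact ⟨a, b, hab, h0⟩
  · exact hsteps i (by omega)

lemma Connected.exists_claspsTo_isTree [Finite V] (hG : G.Connected)
    (hE : G.edgeSet.ncard ≤ Nat.card V) (n : ℕ) {u : V} {C : G.Walk u u} (hC : C.IsCycle)
    (hlen : C.length = 2 * n + 4) : ∃ T : SimpleGraph V, G.ClaspsTo (n + 1) T ∧ T.IsTree := by
  induction n generalizing G u with
  | zero =>
    obtain ⟨v, huv, -, hlt, -⟩ := hC.exists_clasp (by omega)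
    exact ⟨_, claspsTo_succ_of_clasp huv (.refl _),
      (hG.clasp huv).isTree_of_ncard_edgeSet_lt ((hlt hlen).trans_le hE)⟩
  | succ n ih =>
    obtain ⟨v, huv, hle, -, hD⟩ := hC.exists_clasp (by omega)
    obtain ⟨D, hD, hDlen⟩ := hD (by omega)
    obtain ⟨T, hT, htree⟩ := ih (hG.clasp huv) (hle.trans hE) hD (by omega)
    exact ⟨T, claspsTo_succ_of_clasp huv hT, htree⟩

end SimpleGraph

/-- Let `G` be a connected simple graph on a finite vertex type whose
number of edges equals its number of vertices, and suppose `G` contains a cycle of even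
length `k ≥ 4`. Then there is a sequence of graphs `G = G₀, G₁, …, G_{(k-2)/2}` on the
same vertex type such that each `G_{i+1}` is the clasp of `G_i` at some pair of distinct
vertices, and the final graph `G_{(k-2)/2}` is a tree (connected and acyclic). -/
theorem stmt_8 {V : Type*} [Fintype V] [DecidableEq V]
    (G : SimpleGraph V) [DecidableRel G.Adj]
    (hconn : G.Connected)
    (hcard : G.edgeFinset.card = Fintype.card V)
    (k : ℕ) (hke : Even k) (hk4 : 4 ≤ k)
    (u : V) (C : G.Walk u u) (hC : C.IsCycle) (hk : C.length = k) :
    ∃ Gs : ℕ → SimpleGraph V,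
      Gs 0 = G ∧
      (∀ i < (k - 2) / 2,
        ∃ a b : V, a ≠ b ∧ Gs (i + 1) = (Gs i).clasp a b) ∧
      (Gs ((k - 2) / 2)).Connected ∧ (Gs ((k - 2) / 2)).IsAcyclic := by
  obtain ⟨n, rfl⟩ : ∃ n, k = 2 * n + 4 := by
    obtain ⟨m, rfl⟩ := hke
    exact ⟨m - 2, by omega⟩
  have hE : G.edgeSet.ncard ≤ Nat.card V := by
    rw [Set.ncard_eq_toFinset_card', Nat.card_eq_fintype_card]
    exact hcard.le
  obtain ⟨T, ⟨Gs, h0, hsteps, rfl⟩, hT⟩ := hconn.exists_claspsTo_isTree hE n hC hk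
  rw [show (2 * n + 4 - 2) / 2 = n + 1 by omega]
  exact ⟨Gs, h0, hsteps, hT.connected, hT.isAcyclic⟩
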